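/- (Lemma 1, model mismatch.) Let Φ_x, Φ_u be block lower triangular satisfying (I − Z𝒜̂)Φ_x − Zℬ̂Φ_u = I, Φ = [Φ_x; Φ_u], ΔA = Â − A, ΔB = B̂ − B, Δℳ = [blkdiag_{T+1}(ΔA) blkdiag_{T+1}(ΔB)], and R_Φ = (I + ΦZΔℳ)⁻¹. Given data trajectories (x^i, u^i), i = 1,…,N, define w^i = x^i − Z blkdiag_{T+1}(A) x^i − Z blkdiag_{T+1}(B) u^i and ŵ^i = x^i − Z𝒜̂x^i − Zℬ̂u^i, and the empirical measures P̂ = (1/N)Σ_i δ_{Φŵ^i} (empirical predictive distribution) and P̄ = (1/N)Σ_i δ_{R_Φ Φ w^i} (empirical closed-loop distribution). Then d_W(P̂, P̄) ≤ (1/N) Σ_{i=1}^N ‖ R_Φ Φ Z Δℳ (Φŵ^i − [x^i; u^i]) ‖. -/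

import Mathlib

open MeasureTheory Matrix
open scoped ENNReal

/-- The ℓ¹-norm of a vector. -/
noncomputable def l1norm {ι : Type*} [Fintype ι] (v : ι → ℝ) : ℝ := ∑ i, |v i|

/-- The induced ℓ¹-norm of a matrix (maximum absolute column sum). -/
noncomputable def matL1 {ι κ : Type*} [Fintype ι] [Fintype κ] (M : Matrix ι κ ℝ) : ℝ :=
  ⨆ j, ∑ i, |M i j|

/-- The Wasserstein-1 distance (w.r.t. the ℓ¹-norm): infimum over couplings of the expected
ℓ¹-distance. -/
noncomputable def wass {ι : Type*} [Fintype ι] (P Q : Measure (ι → ℝ)) : ℝ :=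
  sInf { r | ∃ π : Measure ((ι → ℝ) × (ι → ℝ)),
    IsProbabilityMeasure π ∧ π.map Prod.fst = P ∧ π.map Prod.snd = Q ∧
    r = ∫ p, l1norm (p.1 - p.2) ∂π }

/-- The uniform empirical measure `(1/N) ∑ᵢ δ_{a i}`. -/
noncomputable def emp {ι : Type*} [Fintype ι] {N : ℕ} (a : Fin N → (ι → ℝ)) :
    Measure (ι → ℝ) :=
  (N : ℝ≥0∞)⁻¹ • ∑ i, Measure.dirac (a i)

/-- The block-downshift matrix `Z`, with `n × n` identity blocks on the first block
subdiagonal and zero blocks elsewhere. -/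
noncomputable def dshift (T n : ℕ) : Matrix (Fin (T+1) × Fin n) (Fin (T+1) × Fin n) ℝ :=
  fun p q => if (p.1 : ℕ) = (q.1 : ℕ) + 1 ∧ p.2 = q.2 then 1 else 0

/-- `blkdiag T M`: block-diagonal matrix with `T+1` copies of `M` on the diagonal. -/
noncomputable def blkdiag (T : ℕ) {n m : ℕ} (M : Matrix (Fin n) (Fin m) ℝ) :
    Matrix (Fin (T+1) × Fin n) (Fin (T+1) × Fin m) ℝ :=
  fun p q => if p.1 = q.1 then M p.2 q.2 else 0

/-- A block-partitioned matrix is block lower triangular: all blocks strictly above the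
block diagonal are zero. -/
def BlockLT {T n m : ℕ} (M : Matrix (Fin (T+1) × Fin m) (Fin (T+1) × Fin n) ℝ) : Prop :=
  ∀ p q, p.1 < q.1 → M p q = 0

/-
Since `Φ` is causal, `Z` delays by one step and `Δℳ` is memoryless, the matrix `ΦZΔℳ` maps every
time step strictly into the future; it is therefore nilpotent, so `I + ΦZΔℳ` is invertible and
`R_Φ (I + ΦZΔℳ) = I`. Writing `w = ŵ + ZΔℳ [x; u]`, this identity gives
`Φŵ - R_Φ Φ w = R_Φ Φ Z Δℳ (Φŵ - [x; u])` for every trajectory. Pairing the `i`-th atoms of the two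
empirical measures is a coupling, whose cost is the average of the norms of these differences.
-/

lemma l1norm_nonneg {ι : Type*} [Fintype ι] (v : ι → ℝ) : 0 ≤ l1norm v :=
  Finset.sum_nonneg fun _ _ => abs_nonneg _

section Wasserstein

variable {ι : Type*} [Fintype ι]

theorem wass_le_integral {P Q : Measure (ι → ℝ)} (π : Measure ((ι → ℝ) × (ι → ℝ)))
    [IsProbabilityMeasure π] (h₁ : π.map Prod.fst = P) (h₂ : π.map Prod.snd = Q) :
    wass P Q ≤ ∫ p, l1norm (p.1 - p.2) ∂π := by
  refine csInf_le ⟨0, ?_⟩ ⟨π, inferInstance, h₁, h₂, rfl⟩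
  rintro r ⟨π', -, -, -, rfl⟩
  exact integral_nonneg fun p => l1norm_nonneg _

theorem wass_zero_left (Q : Measure (ι → ℝ)) : wass 0 Q = 0 := by
  refine (congrArg sInf (Set.eq_empty_iff_forall_notMem.mpr ?_)).trans Real.sInf_empty
  rintro r ⟨π, _, h₁, -, -⟩
  have := congrArg (· Set.univ) h₁
  simp [Measure.map_apply measurable_fst MeasurableSet.univ] at this

end Wasserstein

section Empirical

variable {α β κ : Type*} [MeasurableSpace α] [MeasurableSpace β] [Fintype κ]

theorem map_smul_sum_dirac {f : α → β} (hf : Measurable f) (c : ℝ≥0∞) (a : κ → α) :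
    (c • ∑ i, Measure.dirac (a i)).map f = c • ∑ i, Measure.dirac (f (a i)) := by
  rw [Measure.map_smul, Measure.map_finset_sum' hf.aemeasurable]
  simp only [Measure.map_dirac' hf]

theorem integral_smul_sum_dirac [MeasurableSingletonClass α] (g : α → ℝ) (c : ℝ≥0∞)
    (a : κ → α) : ∫ x, g x ∂(c • ∑ i, Measure.dirac (a i)) = c.toReal * ∑ i, g (a i) := by
  rw [integral_smul_measure,
    integral_finsetSum_measure fun i _ => integrable_dirac enorm_lt_top]
  simp only [integral_dirac, smul_eq_mul]

theorem isProbabilityMeasure_uniform_sum_dirac [Nonempty κ] (a : κ → α) :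
    IsProbabilityMeasure ((Fintype.card κ : ℝ≥0∞)⁻¹ • ∑ i, Measure.dirac (a i)) := by
  constructor
  simp [ENNReal.inv_mul_cancel]

end Empirical

theorem wass_emp_le {ι : Type*} [Fintype ι] {N : ℕ} (a b : Fin N → ι → ℝ) :
    wass (emp a) (emp b) ≤ (N : ℝ)⁻¹ * ∑ i, l1norm (a i - b i) := by
  rcases N.eq_zero_or_pos with rfl | hN
  · simp [emp, wass_zero_left]
  have : Nonempty (Fin N) := ⟨⟨0, hN⟩⟩
  let π := (N : ℝ≥0∞)⁻¹ • ∑ i, Measure.dirac (a i, b i)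
  have : IsProbabilityMeasure π := by
    simpa using isProbabilityMeasure_uniform_sum_dirac fun i => (a i, b i)
  calc wass (emp a) (emp b) ≤ ∫ p, l1norm (p.1 - p.2) ∂π :=
        wass_le_integral π (map_smul_sum_dirac measurable_fst _ _)
          (map_smul_sum_dirac measurable_snd _ _)
    _ = (N : ℝ)⁻¹ * ∑ i, l1norm (a i - b i) := by
        rw [integral_smul_sum_dirac, ENNReal.toReal_inv, ENNReal.toReal_natCast]

section Delay

variable {R ι ι' κ κ' ν : Type*} {f : ι → ℕ} {g : κ → ℕ} {d e : ℕ}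

def HasDelay [Zero R] (f : ι → ℕ) (g : κ → ℕ) (d : ℕ) (M : Matrix ι κ R) : Prop :=
  ∀ p q, f p < g q + d → M p q = 0

theorem HasDelay.mul [Fintype κ] [NonUnitalNonAssocSemiring R] {h : ν → ℕ}
    {M : Matrix ι κ R} {N : Matrix κ ν R} (hM : HasDelay f g d M) (hN : HasDelay g h e N) :
    HasDelay f h (d + e) (M * N) := by
  intro p q hpq
  rw [Matrix.mul_apply]
  refine Finset.sum_eq_zero fun r _ => ?_
  by_cases hr : f p < g r + d
  · rw [hM p r hr, zero_mul]
  · rw [hN r q (by omega), mul_zero]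

theorem hasDelay_one [DecidableEq ι] [Zero R] [One R] (f : ι → ℕ) :
    HasDelay f f 0 (1 : Matrix ι ι R) :=
  fun _ _ hpq => one_apply_ne fun h => by subst h; omega

theorem HasDelay.pow [Fintype ι] [DecidableEq ι] [Semiring R] {M : Matrix ι ι R}
    (hM : HasDelay f f d M) (k : ℕ) : HasDelay f f (k * d) (M ^ k) := by
  induction k with
  | zero => simpa using hasDelay_one f
  | succ k ih => simpa [pow_succ, Nat.succ_mul] using ih.mul hM

theorem HasDelay.eq_zero [Zero R] {M : Matrix ι κ R} (hM : HasDelay f g d M)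
    (hf : ∀ p, f p < d) : M = 0 := by
  ext p q
  exact hM p q (by have := hf p; omega)

theorem HasDelay.isNilpotent [Fintype ι] [DecidableEq ι] [Semiring R] {M : Matrix ι ι R}
    {T : ℕ} (hM : HasDelay f f 1 M) (hf : ∀ p, f p ≤ T) : IsNilpotent M :=
  ⟨T + 1, (hM.pow (T + 1)).eq_zero fun p => by have := hf p; omega⟩

theorem HasDelay.fromRows [Zero R] {f' : ι' → ℕ} {M : Matrix ι κ R} {M' : Matrix ι' κ R}
    (hM : HasDelay f g d M) (hM' : HasDelay f' g d M') :
    HasDelay (Sum.elim f f') g d (Matrix.fromRows M M')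
  | Sum.inl p, q, hpq => hM p q hpq
  | Sum.inr p, q, hpq => hM' p q hpq

theorem HasDelay.fromCols [Zero R] {g' : κ' → ℕ} {M : Matrix ι κ R} {M' : Matrix ι κ' R}
    (hM : HasDelay f g d M) (hM' : HasDelay f g' d M') :
    HasDelay f (Sum.elim g g') d (Matrix.fromCols M M')
  | p, Sum.inl q, hpq => hM p q hpq
  | p, Sum.inr q, hpq => hM' p q hpq

end Delay

section Blocks

variable {T n m : ℕ}

theorem BlockLT.hasDelay {M : Matrix (Fin (T+1) × Fin m) (Fin (T+1) × Fin n) ℝ}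
    (hM : BlockLT M) : HasDelay (fun p => (p.1 : ℕ)) (fun q => (q.1 : ℕ)) 0 M :=
  fun p q hpq => hM p q hpq

theorem hasDelay_dshift : HasDelay (fun p => (p.1 : ℕ)) (fun q => (q.1 : ℕ)) 1 (dshift T n) :=
  fun _ _ hpq => if_neg fun h => by dsimp only at hpq; omega

theorem hasDelay_blkdiag (M : Matrix (Fin n) (Fin m) ℝ) :
    HasDelay (fun p => (p.1 : ℕ)) (fun q => (q.1 : ℕ)) 0 (blkdiag T M) :=
  fun _ _ hpq => if_neg fun h => by dsimp only at hpq; rw [h] at hpq; omega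

theorem blkdiag_sub (M M' : Matrix (Fin n) (Fin m) ℝ) :
    blkdiag T (M - M') = blkdiag T M - blkdiag T M' := by
  ext p q
  simp only [blkdiag, Matrix.sub_apply]
  split_ifs <;> simp

end Blocks

section Identities

variable {𝕜 α β γ : Type*} [Ring 𝕜] [Fintype α] [Fintype β] [Fintype γ]

theorem mulVec_sub_resolvent_mulVec [DecidableEq α] {R : Matrix α α 𝕜} {Φ : Matrix α β 𝕜}
    {K : Matrix β α 𝕜} (hR : R * (1 + Φ * K) = 1) (v : β → 𝕜) (z : α → 𝕜) :
    Φ *ᵥ v - (R * Φ) *ᵥ (v + K *ᵥ z) = (R * Φ * K) *ᵥ (Φ *ᵥ v - z) := by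
  have hRΦK : R * Φ * K = 1 - R := by
    rw [← hR, mul_add, mul_one, Matrix.mul_assoc, add_sub_cancel_left]
  rw [hRΦK, Matrix.mulVec_sub, Matrix.sub_mulVec, Matrix.one_mulVec, ← hRΦK, Matrix.mulVec_add,
    Matrix.mulVec_mulVec, Matrix.mulVec_mulVec]
  abel

theorem sub_mulVec_sub_mulVec_eq_add (S : Matrix α β 𝕜) (A Ahat : Matrix β α 𝕜)
    (B Bhat : Matrix β γ 𝕜) (x : α → 𝕜) (u : γ → 𝕜) :
    x - (S * A) *ᵥ x - (S * B) *ᵥ u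
      = (x - (S * Ahat) *ᵥ x - (S * Bhat) *ᵥ u)
        + (S * Matrix.fromCols (Ahat - A) (Bhat - B)) *ᵥ Sum.elim x u := by
  rw [← Matrix.mulVec_mulVec (Sum.elim x u) S, Matrix.fromCols_mulVec_sumElim]
  simp only [Matrix.mulVec_add, Matrix.sub_mulVec, Matrix.mulVec_sub, ← Matrix.mulVec_mulVec]
  abel

end Identities

theorem stmt6_general {n m T N : ℕ}
    (Ahat A : Matrix (Fin n) (Fin n) ℝ) (Bhat B : Matrix (Fin n) (Fin m) ℝ)
    (Φx : Matrix (Fin (T+1) × Fin n) (Fin (T+1) × Fin n) ℝ)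
    (Φu : Matrix (Fin (T+1) × Fin m) (Fin (T+1) × Fin n) ℝ)
    (hx : BlockLT Φx) (hu : BlockLT Φu)
    (Φ : Matrix ((Fin (T+1) × Fin n) ⊕ (Fin (T+1) × Fin m)) (Fin (T+1) × Fin n) ℝ)
    (hΦ : Φ = Matrix.fromRows Φx Φu)
    (ΔM : Matrix (Fin (T+1) × Fin n) ((Fin (T+1) × Fin n) ⊕ (Fin (T+1) × Fin m)) ℝ)
    (hΔM : ΔM = Matrix.fromCols (blkdiag T (Ahat - A)) (blkdiag T (Bhat - B)))
    (RΦ : Matrix ((Fin (T+1) × Fin n) ⊕ (Fin (T+1) × Fin m))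
                 ((Fin (T+1) × Fin n) ⊕ (Fin (T+1) × Fin m)) ℝ)
    (hR : RΦ = (1 + Φ * dshift T n * ΔM)⁻¹)
    (x : Fin N → (Fin (T+1) × Fin n) → ℝ) (u : Fin N → (Fin (T+1) × Fin m) → ℝ)
    (w what : Fin N → (Fin (T+1) × Fin n) → ℝ)
    (hw : ∀ i, w i = x i - (dshift T n * blkdiag T A) *ᵥ x i
        - (dshift T n * blkdiag T B) *ᵥ u i)
    (hwhat : ∀ i, what i = x i - (dshift T n * blkdiag T Ahat) *ᵥ x i
        - (dshift T n * blkdiag T Bhat) *ᵥ u i) :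
    wass (emp (fun i => Φ *ᵥ what i)) (emp (fun i => (RΦ * Φ) *ᵥ w i))
      ≤ (N : ℝ)⁻¹ * ∑ i, l1norm
          ((RΦ * Φ * dshift T n * ΔM) *ᵥ (Φ *ᵥ what i - Sum.elim (x i) (u i))) := by
  have hdelay : HasDelay (Sum.elim (fun p => (p.1 : ℕ)) fun p => (p.1 : ℕ))
      (Sum.elim (fun p => (p.1 : ℕ)) fun p => (p.1 : ℕ)) 1 (Φ * dshift T n * ΔM) := by
    rw [hΦ, hΔM]
    exact ((hx.hasDelay.fromRows hu.hasDelay).mul hasDelay_dshift).mul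
      ((hasDelay_blkdiag _).fromCols (hasDelay_blkdiag _))
  have hunit : IsUnit (1 + Φ * dshift T n * ΔM) :=
    (hdelay.isNilpotent (T := T) (by rintro (p | p) <;> exact Nat.le_of_lt_succ p.1.isLt)
      ).isUnit_one_add
  have hRinv : RΦ * (1 + Φ * (dshift T n * ΔM)) = 1 := by
    rw [hR, ← Matrix.mul_assoc]
    exact Matrix.nonsing_inv_mul _ ((Matrix.isUnit_iff_isUnit_det _).mp hunit)
  have hw' : ∀ i, w i = what i + (dshift T n * ΔM) *ᵥ Sum.elim (x i) (u i) := fun i => by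
    rw [hw, hwhat, hΔM, blkdiag_sub, blkdiag_sub, sub_mulVec_sub_mulVec_eq_add]
  calc _ ≤ (N : ℝ)⁻¹ * ∑ i, l1norm (Φ *ᵥ what i - (RΦ * Φ) *ᵥ w i) := wass_emp_le _ _
    _ = _ := by simp only [hw', mulVec_sub_resolvent_mulVec hRinv, Matrix.mul_assoc]

/-- **Lemma 1, model mismatch.** The Wasserstein distance between the
empirical predictive distribution and the empirical closed-loop distribution is bounded by
the average norm of the model-mismatch terms. -/
theorem stmt6 {n m T N : ℕ} (hn : 0 < n) (hm : 0 < m) (hT : 0 < T) (hN : 0 < N)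
    (Ahat A : Matrix (Fin n) (Fin n) ℝ) (Bhat B : Matrix (Fin n) (Fin m) ℝ)
    (Φx : Matrix (Fin (T+1) × Fin n) (Fin (T+1) × Fin n) ℝ)
    (Φu : Matrix (Fin (T+1) × Fin m) (Fin (T+1) × Fin n) ℝ)
    (hx : BlockLT Φx) (hu : BlockLT Φu)
    (hSLS : (1 - dshift T n * blkdiag T Ahat) * Φx - dshift T n * blkdiag T Bhat * Φu = 1)
    (Φ : Matrix ((Fin (T+1) × Fin n) ⊕ (Fin (T+1) × Fin m)) (Fin (T+1) × Fin n) ℝ)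
    (hΦ : Φ = Matrix.fromRows Φx Φu)
    (ΔM : Matrix (Fin (T+1) × Fin n) ((Fin (T+1) × Fin n) ⊕ (Fin (T+1) × Fin m)) ℝ)
    (hΔM : ΔM = Matrix.fromCols (blkdiag T (Ahat - A)) (blkdiag T (Bhat - B)))
    (RΦ : Matrix ((Fin (T+1) × Fin n) ⊕ (Fin (T+1) × Fin m))
                 ((Fin (T+1) × Fin n) ⊕ (Fin (T+1) × Fin m)) ℝ)
    (hR : RΦ = (1 + Φ * dshift T n * ΔM)⁻¹)
    (x : Fin N → (Fin (T+1) × Fin n) → ℝ) (u : Fin N → (Fin (T+1) × Fin m) → ℝ)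
    (w what : Fin N → (Fin (T+1) × Fin n) → ℝ)
    (hw : ∀ i, w i = x i - (dshift T n * blkdiag T A) *ᵥ x i
        - (dshift T n * blkdiag T B) *ᵥ u i)
    (hwhat : ∀ i, what i = x i - (dshift T n * blkdiag T Ahat) *ᵥ x i
        - (dshift T n * blkdiag T Bhat) *ᵥ u i) :
    wass (emp (fun i => Φ *ᵥ what i)) (emp (fun i => (RΦ * Φ) *ᵥ w i))
      ≤ (N : ℝ)⁻¹ * ∑ i, l1norm
          ((RΦ * Φ * dshift T n * ΔM) *ᵥ (Φ *ᵥ what i - Sum.elim (x i) (u i))) :=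
  stmt6_general Ahat A Bhat B Φx Φu hx hu Φ hΦ ΔM hΔM RΦ hR x u w what hw hwhat
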